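/- For a complex polynomial C(t) = Σ_i a_i t^i and a real number R > 0, set ‖C‖_R = Σ_i |a_i| R^i. Let L(ζ) = Σ_{j=0}^{ℓ} A_j ζ^j be a complex polynomial with A_ℓ ≠ 0, and let R > 0 and c ≥ 0 satisfy c < R. Then there exist α > 0 and M > 0 such that for every μ ∈ ℂ with |μ| ≥ M and every complex polynomial C with deg C ≤ c·|μ|, one has ‖Δ^ℓ C‖_R ≤ α·‖Σ_{j=0}^{ℓ} A_j Δ^j C‖_R, where Δ v = μ·v + dv/dt. -/

import Mathlib

/-- The weighted `ℓ¹`-norm on complex polynomials: for `C(t) = Σ_i a_i t^i`,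
`‖C‖_R = Σ_i |a_i| R^i`. -/
noncomputable def normR (R : ℝ) (C : Polynomial ℂ) : ℝ :=
  ∑ i ∈ C.support, ‖C.coeff i‖ * R ^ i

/-- The operator `Δ v = μ·v + dv/dt` on `ℂ[t]`. -/
noncomputable def DeltaOp (μ : ℂ) (v : Polynomial ℂ) : Polynomial ℂ :=
  Polynomial.C μ * v + Polynomial.derivative v

/-!
Differentiation multiplies `‖·‖_R` by at most `deg / R`, so on polynomials of degree at most
`c|μ|` the operator `Δ = μ + d/dt` expands `‖·‖_R` by at least `κ = (1 - c/R)|μ|`; it does not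
raise the degree. Hence `κ ‖Δ^j C‖_R ≤ ‖Δ^ℓ C‖_R` for `j < ℓ`, and once `κ` is large compared
with `Σ_{j<ℓ} |A_j| / |A_ℓ|` the leading term `A_ℓ Δ^ℓ C` carries at least half of
`‖Σ_j A_j Δ^j C‖_R`, which gives the bound with `α = 2 / |A_ℓ|`.
-/

open Polynomial Finset

theorem pow_mul_le_iterate {α : Type*} (f : α → α) (N : α → ℝ) {P : α → Prop}
    (hP : ∀ v, P v → P (f v)) {κ : ℝ} (hκ : 0 ≤ κ) (hf : ∀ v, P v → κ * N v ≤ N (f v))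
    (k : ℕ) {v : α} (hv : P v) : κ ^ k * N v ≤ N (f^[k] v) := by
  induction k generalizing v with
  | zero => simp
  | succ k ih =>
    calc κ ^ (k + 1) * N v = κ ^ k * (κ * N v) := by ring
      _ ≤ κ ^ k * N (f v) := mul_le_mul_of_nonneg_left (hf v hv) (pow_nonneg hκ k)
      _ ≤ N (f^[k + 1] v) := ih (hP v hv)

section normR

variable {R : ℝ}

theorem normR_eq_sum_range (p : ℂ[X]) {n : ℕ} (hn : p.natDegree < n) :
    normR R p = ∑ i ∈ range n, ‖p.coeff i‖ * R ^ i :=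
  sum_over_range' p (f := fun i a => ‖a‖ * R ^ i) (fun i => by simp) n hn

theorem normR_nonneg (hR : 0 ≤ R) (p : ℂ[X]) : 0 ≤ normR R p :=
  sum_nonneg fun i _ => mul_nonneg (norm_nonneg _) (pow_nonneg hR i)

theorem normR_smul (a : ℂ) (p : ℂ[X]) : normR R (a • p) = ‖a‖ * normR R p := by
  have hn : (a • p).natDegree < p.natDegree + 1 := Nat.lt_succ_of_le (natDegree_smul_le a p)
  rw [normR_eq_sum_range _ hn, normR_eq_sum_range p p.natDegree.lt_succ_self, mul_sum]
  simp only [coeff_smul, smul_eq_mul, norm_mul, mul_assoc]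

theorem normR_neg (p : ℂ[X]) : normR R (-p) = normR R p := by
  simp [normR, support_neg]

theorem normR_add_le (hR : 0 ≤ R) (p q : ℂ[X]) :
    normR R (p + q) ≤ normR R p + normR R q := by
  set n := max p.natDegree q.natDegree + 1
  have hp : p.natDegree < n := Nat.lt_succ_of_le (le_max_left _ _)
  have hq : q.natDegree < n := Nat.lt_succ_of_le (le_max_right _ _)
  have hpq : (p + q).natDegree < n := Nat.lt_succ_of_le (natDegree_add_le p q)
  rw [normR_eq_sum_range _ hpq, normR_eq_sum_range _ hp, normR_eq_sum_range _ hq,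
    ← sum_add_distrib]
  refine sum_le_sum fun i _ => ?_
  rw [coeff_add, ← add_mul]
  exact mul_le_mul_of_nonneg_right (norm_add_le _ _) (pow_nonneg hR i)

theorem normR_sub_le (hR : 0 ≤ R) (p q : ℂ[X]) :
    normR R (p - q) ≤ normR R p + normR R q := by
  simpa only [sub_eq_add_neg, normR_neg] using normR_add_le hR p (-q)

theorem normR_sum_le (hR : 0 ≤ R) (s : Finset ℕ) (f : ℕ → ℂ[X]) :
    normR R (∑ j ∈ s, f j) ≤ ∑ j ∈ s, normR R (f j) :=
  le_sum_of_subadditive (normR R) (by simp [normR]) (normR_add_le hR) s f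

theorem mul_normR_derivative_le (hR : 0 ≤ R) (p : ℂ[X]) :
    R * normR R (derivative p) ≤ p.natDegree * normR R p := by
  set d := p.natDegree
  have hder : (derivative p).natDegree < d + 1 :=
    Nat.lt_succ_of_le ((natDegree_derivative_le p).trans (Nat.sub_le d 1))
  have hcoeff (i : ℕ) : ((i : ℝ) + 1) * ‖p.coeff (i + 1)‖ ≤ d * ‖p.coeff (i + 1)‖ := by
    by_cases hi : i + 1 ≤ d
    · exact mul_le_mul_of_nonneg_right (by exact_mod_cast hi) (norm_nonneg _)
    · simp [coeff_eq_zero_of_natDegree_lt (not_le.mp hi)]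
  calc R * normR R (derivative p)
      = ∑ i ∈ range (d + 1), ((i : ℝ) + 1) * ‖p.coeff (i + 1)‖ * R ^ (i + 1) := by
        rw [normR_eq_sum_range _ hder, mul_sum]
        refine sum_congr rfl fun i _ => ?_
        rw [coeff_derivative, norm_mul, ← Nat.cast_succ, Complex.norm_natCast]
        push_cast
        ring
    _ ≤ ∑ i ∈ range (d + 1), d * (‖p.coeff (i + 1)‖ * R ^ (i + 1)) :=
        sum_le_sum fun i _ => by
          rw [← mul_assoc]; exact mul_le_mul_of_nonneg_right (hcoeff i) (pow_nonneg hR _)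
    _ ≤ d * normR R p := by
        rw [← mul_sum, normR_eq_sum_range p (n := d + 2) (by omega),
          sum_range_succ' (fun i => ‖p.coeff i‖ * R ^ i) (d + 1)]
        gcongr
        exact le_add_of_nonneg_right (mul_nonneg (norm_nonneg _) (pow_nonneg hR _))

end normR

theorem natDegree_deltaOp_le (μ : ℂ) (v : ℂ[X]) : (DeltaOp μ v).natDegree ≤ v.natDegree :=
  natDegree_add_le_of_degree_le (natDegree_C_mul_le μ v)
    ((natDegree_derivative_le v).trans (Nat.sub_le _ 1))

theorem sub_mul_normR_le_mul_normR_deltaOp {R : ℝ} (hR : 0 ≤ R) (μ : ℂ) (v : ℂ[X]) :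
    (R * ‖μ‖ - v.natDegree) * normR R v ≤ R * normR R (DeltaOp μ v) := by
  have hsplit : C μ * v = DeltaOp μ v - derivative v := by rw [DeltaOp]; ring
  have hμ : ‖μ‖ * normR R v ≤ normR R (DeltaOp μ v) + normR R (derivative v) := by
    rw [← normR_smul, smul_eq_C_mul, hsplit]
    exact normR_sub_le hR _ _
  nlinarith [mul_le_mul_of_nonneg_left hμ hR, mul_normR_derivative_le hR v]

theorem mul_normR_le_normR_deltaOp {R c : ℝ} (hR : 0 < R) (μ : ℂ) {v : ℂ[X]}
    (hv : (v.natDegree : ℝ) ≤ c * ‖μ‖) :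
    (1 - c / R) * ‖μ‖ * normR R v ≤ normR R (DeltaOp μ v) := by
  have hκ : (1 - c / R) * ‖μ‖ ≤ (R * ‖μ‖ - v.natDegree) / R := by
    have hexp : (1 - c / R) * ‖μ‖ * R = R * ‖μ‖ - c * ‖μ‖ := by field_simp
    rw [le_div_iff₀ hR, hexp]
    linarith
  calc (1 - c / R) * ‖μ‖ * normR R v ≤ (R * ‖μ‖ - v.natDegree) / R * normR R v :=
        mul_le_mul_of_nonneg_right hκ (normR_nonneg hR.le v)
    _ ≤ normR R (DeltaOp μ v) := by
        rw [div_mul_eq_mul_div, div_le_iff₀' hR]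
        exact sub_mul_normR_le_mul_normR_deltaOp hR.le μ v

theorem mul_normR_le_two_mul_normR_sum {R : ℝ} (hR : 0 ≤ R) (ℓ : ℕ) (A : ℕ → ℂ)
    (f : ℕ → ℂ[X]) {κ : ℝ} (hκ : 0 < κ) (hκA : 2 * ∑ j ∈ range ℓ, ‖A j‖ ≤ ‖A ℓ‖ * κ)
    (hf : ∀ j < ℓ, κ * normR R (f j) ≤ normR R (f ℓ)) :
    ‖A ℓ‖ * normR R (f ℓ) ≤ 2 * normR R (∑ j ∈ range (ℓ + 1), A j • f j) := by
  set N := normR R (f ℓ)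
  set L := normR R (∑ j ∈ range (ℓ + 1), A j • f j)
  set T := ∑ j ∈ range ℓ, ‖A j‖ * normR R (f j)
  have htri : ‖A ℓ‖ * N ≤ L + T := by
    have hsplit : A ℓ • f ℓ = ∑ j ∈ range (ℓ + 1), A j • f j - ∑ j ∈ range ℓ, A j • f j := by
      rw [sum_range_succ]; abel
    calc ‖A ℓ‖ * N = normR R (A ℓ • f ℓ) := (normR_smul _ _).symm
      _ ≤ L + normR R (∑ j ∈ range ℓ, A j • f j) := hsplit ▸ normR_sub_le hR _ _
      _ ≤ L + T := by
        gcongr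
        exact (normR_sum_le hR _ _).trans (sum_le_sum fun j _ => (normR_smul _ _).le)
  have hT : κ * T ≤ (∑ j ∈ range ℓ, ‖A j‖) * N := by
    rw [mul_sum, sum_mul]
    refine sum_le_sum fun j hj => ?_
    rw [mul_left_comm]
    exact mul_le_mul_of_nonneg_left (hf j (mem_range.mp hj)) (norm_nonneg _)
  have h2T : 2 * T ≤ ‖A ℓ‖ * N := by
    refine le_of_mul_le_mul_left ?_ hκ
    nlinarith [normR_nonneg hR (f ℓ)]
  linarith

theorem iterate_delta_le_L_general (R : ℝ) (hR : 0 < R) (ℓ : ℕ) (A : ℕ → ℂ) (hA : A ℓ ≠ 0)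
    (c : ℝ) (hcR : c < R) :
    ∃ α > (0 : ℝ), ∃ M > (0 : ℝ), ∀ μ : ℂ, M ≤ ‖μ‖ →
      ∀ C : Polynomial ℂ, (C.natDegree : ℝ) ≤ c * ‖μ‖ →
        normR R ((DeltaOp μ)^[ℓ] C) ≤
          α * normR R (∑ j ∈ Finset.range (ℓ + 1), A j • (DeltaOp μ)^[j] C) := by
  set S := ∑ j ∈ range ℓ, ‖A j‖
  have ha : 0 < ‖A ℓ‖ := norm_pos_iff.mpr hA
  have hε : 0 < 1 - c / R := sub_pos.mpr ((div_lt_one hR).mpr hcR)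
  refine ⟨2 / ‖A ℓ‖, by positivity, max 1 (2 * S / ‖A ℓ‖) / (1 - c / R), by positivity,
    fun μ hμ C hC => ?_⟩
  set κ := (1 - c / R) * ‖μ‖
  obtain ⟨hκ1, hκS⟩ := max_le_iff.mp ((div_le_iff₀' hε).mp hμ)
  have hstable (v : ℂ[X]) (hv : (v.natDegree : ℝ) ≤ c * ‖μ‖) :
      ((DeltaOp μ v).natDegree : ℝ) ≤ c * ‖μ‖ :=
    le_trans (by exact_mod_cast natDegree_deltaOp_le μ v) hv
  have hdeg (j : ℕ) : (((DeltaOp μ)^[j] C).natDegree : ℝ) ≤ c * ‖μ‖ :=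
    Function.Iterate.rec (fun w : ℂ[X] => (w.natDegree : ℝ) ≤ c * ‖μ‖) hC hstable j
  have hdom (j : ℕ) (hj : j < ℓ) :
      κ * normR R ((DeltaOp μ)^[j] C) ≤ normR R ((DeltaOp μ)^[ℓ] C) := by
    have hiter := pow_mul_le_iterate (DeltaOp μ) (normR R) hstable (by linarith)
      (fun v hv => mul_normR_le_normR_deltaOp hR μ hv) (ℓ - j) (hdeg j)
    rw [← Function.iterate_add_apply, Nat.sub_add_cancel hj.le] at hiter
    exact le_trans (mul_le_mul_of_nonneg_right (le_self_pow₀ hκ1 (Nat.sub_ne_zero_of_lt hj))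
      (normR_nonneg hR.le _)) hiter
  rw [div_mul_eq_mul_div, le_div_iff₀' ha]
  exact mul_normR_le_two_mul_normR_sum hR.le ℓ A (fun j => (DeltaOp μ)^[j] C) (by linarith)
    ((div_le_iff₀' ha).mp hκS) hdom

/-- For `L(ζ) = Σ_{j≤ℓ} A_j ζ^j` with `A_ℓ ≠ 0`, `R > 0` and `0 ≤ c < R`, there are
`α > 0` and `M > 0` such that for every `μ` with `|μ| ≥ M` and every polynomial `C` with
`deg C ≤ c|μ|`: `‖Δ^ℓ C‖_R ≤ α·‖Σ_j A_j Δ^j C‖_R`, where `Δ v = μ v + v'`. -/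
theorem iterate_delta_le_L (R : ℝ) (hR : 0 < R) (ℓ : ℕ) (A : ℕ → ℂ) (hA : A ℓ ≠ 0)
    (c : ℝ) (hc0 : 0 ≤ c) (hcR : c < R) :
    ∃ α > (0 : ℝ), ∃ M > (0 : ℝ), ∀ μ : ℂ, M ≤ ‖μ‖ →
      ∀ C : Polynomial ℂ, (C.natDegree : ℝ) ≤ c * ‖μ‖ →
        normR R ((DeltaOp μ)^[ℓ] C) ≤
          α * normR R (∑ j ∈ Finset.range (ℓ + 1), A j • (DeltaOp μ)^[j] C) :=
  iterate_delta_le_L_general R hR ℓ A hA c hcR
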